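/- arXiv:1712.10099 — 3 statements merged into one kernel-verified Lean document; each statement's English description precedes it below -/
import Mathlib

section
/- Let Z_1,...,Z_p be independent standard normal random variables and for θ = (θ_1,...,θ_p) with all θ_i > 0 let F(t;θ) be the distribution function of T_θ = Σ_{i=1}^p Z_i²/θ_i. Then for each i and every t > 0, the partial derivative ∂F(t;θ)/∂θ_i is strictly positive. -/
open MeasureTheory ProbabilityTheory Real

/-- Law of a vector of `p` i.i.d. standard normal random variables. -/
noncomputable def stdGaussianPi (p : ℕ) : Measure (Fin p → ℝ) :=
  Measure.pi fun _ => gaussianReal 0 1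

/-- `F(t;θ) = P(∑ Z i ^ 2 / θ i ≤ t)` for i.i.d. standard normals `Z i`. -/
noncomputable def Fcdf (p : ℕ) (θ : Fin p → ℝ) (t : ℝ) : ℝ :=
  (stdGaussianPi p {z | ∑ i, (z i) ^ 2 / θ i ≤ t}).toReal

/-!
Write `S = ∑_{j ≠ i} Z_j² / θ_j` and let `G`, `g` be the distribution function and density of
`Z²`, `Z` standard normal. Integrating out `Z_i` first gives `F(t; θ) = E[G(θ_i (t - S))]`.
Since `c g(x c) ≤ √(t / (2π x))` for `c ≤ t`, one may differentiate under the expectation: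
`∂F/∂θ_i = E[(t - S) g(θ_i (t - S))]`. The integrand is nonnegative and strictly positive on the
event `S < t`, a nonempty open set, which the Gaussian measure charges.
-/

noncomputable def gaussianSqCDF (u : ℝ) : ℝ :=
  (gaussianReal 0 1 {y | y ^ 2 ≤ u}).toReal

-- Vanishes for `u ≤ 0`, where `√(2πu) = 0` and division by zero gives `0`.
noncomputable def gaussianSqPDF (u : ℝ) : ℝ :=
  exp (-u / 2) / √(2 * π * u)

lemma monotone_gaussianSqCDF : Monotone gaussianSqCDF := fun _ _ hab =>
  ENNReal.toReal_mono (measure_ne_top _ _) (measure_mono fun _ hy => le_trans hy hab)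

lemma gaussianSqCDF_nonneg (u : ℝ) : 0 ≤ gaussianSqCDF u := ENNReal.toReal_nonneg

lemma gaussianSqCDF_le_one (u : ℝ) : gaussianSqCDF u ≤ 1 := measureReal_le_one

lemma gaussianSqCDF_of_neg {u : ℝ} (hu : u < 0) : gaussianSqCDF u = 0 := by
  have : {y : ℝ | y ^ 2 ≤ u} = ∅ :=
    Set.eq_empty_of_forall_notMem fun y hy => (hu.trans_le (sq_nonneg y)).not_ge hy
  simp [gaussianSqCDF, this]

lemma gaussianSqCDF_eq_integral {u : ℝ} (hu : 0 ≤ u) :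
    gaussianSqCDF u = ∫ y in -√u..√u, gaussianPDFReal 0 1 y := by
  have hset : {y : ℝ | y ^ 2 ≤ u} = Set.Icc (-√u) √u := by
    ext y; exact sq_le hu
  rw [gaussianSqCDF, hset, gaussianReal_apply_eq_integral 0 one_ne_zero,
    ENNReal.toReal_ofReal (integral_nonneg (gaussianPDFReal_nonneg 0 1)),
    integral_Icc_eq_integral_Ioc, intervalIntegral.integral_of_le (neg_le_self (sqrt_nonneg u))]

lemma hasDerivAt_integral_neg_self {E : Type*} [NormedAddCommGroup E] [NormedSpace ℝ E]
    [CompleteSpace E] {f : ℝ → E} (hf : Continuous f) (a : ℝ) :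
    HasDerivAt (fun a => ∫ y in -a..a, f y) (f a + f (-a)) a := by
  have hsplit : (fun a : ℝ => ∫ y in -a..a, f y)
      = fun a => (∫ y in (0 : ℝ)..a, f y) - ∫ y in (0 : ℝ)..(-a), f y := by
    funext a
    rw [← intervalIntegral.integral_add_adjacent_intervals (hf.intervalIntegrable (-a) 0)
      (hf.intervalIntegrable 0 a), intervalIntegral.integral_symm]
    abel
  have hneg : HasDerivAt (fun a : ℝ => ∫ y in (0 : ℝ)..(-a), f y) (-f (-a)) a := by
    simpa [Function.comp_def] using
      (hf.integral_hasStrictDerivAt 0 (-a)).hasDerivAt.scomp a (hasDerivAt_neg a)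
  rw [hsplit, ← sub_neg_eq_add]
  exact (hf.integral_hasStrictDerivAt 0 a).hasDerivAt.sub hneg

lemma hasDerivAt_gaussianSqCDF {u : ℝ} (hu : 0 < u) :
    HasDerivAt gaussianSqCDF (gaussianSqPDF u) u := by
  have hG : gaussianSqCDF =ᶠ[nhds u] fun u => ∫ y in -√u..√u, gaussianPDFReal 0 1 y := by
    filter_upwards [lt_mem_nhds hu] with v hv using gaussianSqCDF_eq_integral hv.le
  have hφ : Continuous (gaussianPDFReal 0 1) := by unfold gaussianPDFReal; fun_prop
  have hcomp := (hasDerivAt_integral_neg_self hφ √u).comp u (hasDerivAt_sqrt hu.ne')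
  refine (hcomp.congr_of_eventuallyEq hG).congr_deriv ?_
  simp only [gaussianSqPDF, gaussianPDFReal, NNReal.coe_one, mul_one, sub_zero, neg_sq,
    sq_sqrt hu.le]
  rw [sqrt_mul' _ hu.le]
  field_simp
  norm_num

lemma gaussianSqPDF_of_nonpos {u : ℝ} (hu : u ≤ 0) : gaussianSqPDF u = 0 := by
  rw [gaussianSqPDF, sqrt_eq_zero_of_nonpos (mul_nonpos_of_nonneg_of_nonpos (by positivity) hu),
    div_zero]

lemma gaussianSqPDF_pos {u : ℝ} (hu : 0 < u) : 0 < gaussianSqPDF u := by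
  unfold gaussianSqPDF; positivity

lemma mul_gaussianSqPDF_mul_nonneg {x : ℝ} (hx : 0 ≤ x) (c : ℝ) :
    0 ≤ c * gaussianSqPDF (x * c) := by
  rcases le_or_gt c 0 with hc | hc
  · rw [gaussianSqPDF_of_nonpos (mul_nonpos_of_nonneg_of_nonpos hx hc), mul_zero]
  · unfold gaussianSqPDF; positivity

lemma hasDerivAt_gaussianSqCDF_mul (c : ℝ) {x : ℝ} (hx : 0 < x) :
    HasDerivAt (fun x => gaussianSqCDF (x * c)) (c * gaussianSqPDF (x * c)) x := by
  rcases lt_trichotomy c 0 with hc | rfl | hc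
  · have hzero : (fun x => gaussianSqCDF (x * c)) =ᶠ[nhds x] fun _ => 0 := by
      filter_upwards [lt_mem_nhds hx] with y hy
      exact gaussianSqCDF_of_neg (mul_neg_of_pos_of_neg hy hc)
    rw [gaussianSqPDF_of_nonpos (mul_neg_of_pos_of_neg hx hc).le, mul_zero]
    exact (hasDerivAt_const x 0).congr_of_eventuallyEq hzero
  · simpa using hasDerivAt_const x (gaussianSqCDF 0)
  · exact ((hasDerivAt_gaussianSqCDF (mul_pos hx hc)).comp x (hasDerivAt_mul_const c)).congr_deriv
      (mul_comm _ _)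

lemma mul_gaussianSqPDF_mul_le {b x c t : ℝ} (hb : 0 < b) (hbx : b ≤ x) (hct : c ≤ t) :
    c * gaussianSqPDF (x * c) ≤ √(t / (2 * π * b)) := by
  have hx : 0 < x := hb.trans_le hbx
  rcases le_or_gt c 0 with hc | hc
  · rw [gaussianSqPDF_of_nonpos (mul_nonpos_of_nonneg_of_nonpos hx.le hc), mul_zero]
    positivity
  have hsplit : c * gaussianSqPDF (x * c) = √(c / (2 * π * x)) * exp (-(x * c) / 2) := by
    rw [gaussianSqPDF, show 2 * π * (x * c) = 2 * π * x * c by ring, sqrt_mul' _ hc.le,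
      sqrt_div' _ (by positivity)]
    field_simp
    rw [sq_sqrt hc.le]
  calc c * gaussianSqPDF (x * c) = √(c / (2 * π * x)) * exp (-(x * c) / 2) := hsplit
    _ ≤ √(c / (2 * π * x)) := mul_le_of_le_one_right (sqrt_nonneg _)
        (exp_le_one_iff.mpr (by nlinarith))
    _ ≤ √(t / (2 * π * b)) := sqrt_le_sqrt (by gcongr; linarith)

lemma hasDerivAt_integral_gaussianSqCDF_mul {α : Type*} [MeasurableSpace α] {ν : Measure α}
    [IsFiniteMeasure ν] {c : α → ℝ} (hc : Measurable c) {t : ℝ} (hct : ∀ a, c a ≤ t) {x₀ : ℝ}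
    (hx₀ : 0 < x₀) :
    Integrable (fun a => c a * gaussianSqPDF (x₀ * c a)) ν ∧
      HasDerivAt (fun x => ∫ a, gaussianSqCDF (x * c a) ∂ν)
        (∫ a, c a * gaussianSqPDF (x₀ * c a) ∂ν) x₀ := by
  have hb : 0 < x₀ / 2 := half_pos hx₀
  have hF_meas (x : ℝ) : AEStronglyMeasurable (fun a => gaussianSqCDF (x * c a)) ν :=
    (monotone_gaussianSqCDF.measurable.comp (hc.const_mul x)).aestronglyMeasurable
  have hpdf_meas : Measurable gaussianSqPDF := by unfold gaussianSqPDF; fun_prop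
  have hF'_meas : Measurable fun a => c a * gaussianSqPDF (x₀ * c a) := by fun_prop
  refine hasDerivAt_integral_of_dominated_loc_of_deriv_le (Ioi_mem_nhds (half_lt_self hx₀))
    (.of_forall hF_meas) ?_ (F' := fun x a => c a * gaussianSqPDF (x * c a))
    hF'_meas.aestronglyMeasurable (bound := fun _ => √(t / (2 * π * (x₀ / 2)))) ?_
    (integrable_const _) ?_
  · refine (integrable_const 1).mono' (hF_meas x₀) (ae_of_all _ fun a => ?_)
    rw [norm_of_nonneg (gaussianSqCDF_nonneg _)]
    exact gaussianSqCDF_le_one _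
  · refine ae_of_all _ fun a x hx => ?_
    rw [norm_of_nonneg (mul_gaussianSqPDF_mul_nonneg (hb.trans hx).le _)]
    exact mul_gaussianSqPDF_mul_le hb (le_of_lt hx) (hct a)
  · exact ae_of_all _ fun a x hx => hasDerivAt_gaussianSqCDF_mul (c a) (hb.trans hx)

lemma integral_mul_gaussianSqPDF_mul_pos {α : Type*} [MeasurableSpace α] {ν : Measure α}
    {c : α → ℝ} {x : ℝ} (hx : 0 < x)
    (hint : Integrable (fun a => c a * gaussianSqPDF (x * c a)) ν) (hpos : 0 < ν {a | 0 < c a}) :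
    0 < ∫ a, c a * gaussianSqPDF (x * c a) ∂ν := by
  rw [integral_pos_iff_support_of_nonneg (fun a => mul_gaussianSqPDF_mul_nonneg hx.le (c a)) hint]
  refine hpos.trans_le (measure_mono fun a ha => ?_)
  exact (mul_pos ha (gaussianSqPDF_pos (mul_pos hx ha))).ne'

lemma sum_sq_div_update_le_iff {n : ℕ} (θ : Fin (n + 1) → ℝ) (i : Fin (n + 1))
    (z : Fin (n + 1) → ℝ) (t : ℝ) {x : ℝ} (hx : 0 < x) :
    ∑ k, z k ^ 2 / Function.update θ i x k ≤ t ↔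
      z i ^ 2 ≤ x * (t - ∑ j, z (i.succAbove j) ^ 2 / θ (i.succAbove j)) := by
  rw [Fin.sum_univ_succAbove _ i, Function.update_self, ← le_sub_iff_add_le, div_le_iff₀ hx,
    mul_comm]
  simp only [Function.update_of_ne (Fin.succAbove_ne i _)]

lemma Fcdf_update_eq_integral {n : ℕ} (θ : Fin (n + 1) → ℝ) (i : Fin (n + 1)) (t : ℝ) {x : ℝ}
    (hx : 0 < x) :
    Fcdf (n + 1) (Function.update θ i x) t =
      ∫ w, gaussianSqCDF (x * (t - ∑ j, w j ^ 2 / θ (i.succAbove j))) ∂stdGaussianPi n := by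
  set B : Set (ℝ × (Fin n → ℝ)) := {p | p.1 ^ 2 ≤ x * (t - ∑ j, p.2 j ^ 2 / θ (i.succAbove j))}
  have hB : MeasurableSet B := measurableSet_le (by fun_prop) (by fun_prop)
  have hpre : {z | ∑ k, z k ^ 2 / Function.update θ i x k ≤ t} =
      MeasurableEquiv.piFinSuccAbove (fun _ => ℝ) i ⁻¹' B := by
    ext z
    exact sum_sq_div_update_le_iff θ i z t hx
  rw [Fcdf, stdGaussianPi, hpre,
    (measurePreserving_piFinSuccAbove (fun _ => gaussianReal 0 1) i).measure_preimage
      hB.nullMeasurableSet, Measure.prod_apply_symm hB, ← integral_toReal]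
  · rfl
  · exact (measurable_measure_prodMk_right hB).aemeasurable
  · exact ae_of_all _ fun _ => measure_lt_top _ _

instance (n : ℕ) : IsProbabilityMeasure (stdGaussianPi n) := by
  unfold stdGaussianPi; infer_instance

instance (n : ℕ) : (stdGaussianPi n).IsOpenPosMeasure :=
  have : (gaussianReal 0 1).IsOpenPosMeasure :=
    (gaussianReal_absolutelyContinuous' 0 one_ne_zero).isOpenPosMeasure
  Measure.pi.isOpenPosMeasure _

/-- the partial derivative of `F(t;θ)` in each `θ i` is strictly positive. -/
theorem partial_deriv_Fcdf_pos (p : ℕ) (θ : Fin p → ℝ) (hθ : ∀ i, 0 < θ i)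
    (i : Fin p) (t : ℝ) (ht : 0 < t) :
    0 < deriv (fun x => Fcdf p (Function.update θ i x) t) (θ i) := by
  rcases p with _ | n
  · exact i.elim0
  set S : (Fin n → ℝ) → ℝ := fun w => ∑ j, w j ^ 2 / θ (i.succAbove j)
  have hS : Continuous S := by fun_prop
  have hS_nonneg (w : Fin n → ℝ) : 0 ≤ S w :=
    Finset.sum_nonneg fun j _ => div_nonneg (sq_nonneg _) (hθ _).le
  obtain ⟨hint, hderiv⟩ := hasDerivAt_integral_gaussianSqCDF_mul (ν := stdGaussianPi n)
    (hS.measurable.const_sub t) (fun w => sub_le_self t (hS_nonneg w)) (hθ i)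
  have hF : (fun x => Fcdf (n + 1) (Function.update θ i x) t) =ᶠ[nhds (θ i)]
      fun x => ∫ w, gaussianSqCDF (x * (t - S w)) ∂stdGaussianPi n := by
    filter_upwards [lt_mem_nhds (hθ i)] with x hx using Fcdf_update_eq_integral θ i t hx
  rw [(hderiv.congr_of_eventuallyEq hF).deriv]
  refine integral_mul_gaussianSqPDF_mul_pos (hθ i) hint ?_
  exact (isOpen_lt continuous_const (continuous_const.sub hS)).measure_pos _
    ⟨0, by simpa [S] using ht⟩
end

section
/- Let Z_1, Z_2 be independent standard normal random variables and let F_12(t; θ_1, θ_2) = P(Z_1²/θ_1 + Z_2²/θ_2 ≤ t) for θ_1, θ_2 > 0. Then F_12(t; θ_1, θ_2) = 4 ∫_0^{√(θ_2 t)} Φ(√(θ_1(t − s²/θ_2))) φ(s) ds − 2Φ(√(θ_2 t)) + 1, where φ and Φ are the standard normal density and distribution function. -/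
open MeasureTheory ProbabilityTheory Real

/-- `F₁₂(t;θ₁,θ₂) = P(Z₁²/θ₁ + Z₂²/θ₂ ≤ t)` for independent standard normals. -/
noncomputable def F12 (θ₁ θ₂ t : ℝ) : ℝ :=
  (((gaussianReal 0 1).prod (gaussianReal 0 1))
    {z : ℝ × ℝ | z.1 ^ 2 / θ₁ + z.2 ^ 2 / θ₂ ≤ t}).toReal

/-- Standard normal distribution function `Φ`. -/
noncomputable def stdNormalCDF (x : ℝ) : ℝ := (gaussianReal 0 1 (Set.Iic x)).toReal

lemma gr_singleton (x : ℝ) : gaussianReal 0 1 {x} = 0 :=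
  gaussianReal_absolutelyContinuous 0 one_ne_zero (by simp)

lemma cdf_mono : Monotone stdNormalCDF := fun a b hab =>
  ENNReal.toReal_mono (measure_ne_top _ _) (measure_mono (Set.Iic_subset_Iic.mpr hab))

lemma cdf_nonneg (x : ℝ) : 0 ≤ stdNormalCDF x := ENNReal.toReal_nonneg

lemma cdf_le_one (x : ℝ) : stdNormalCDF x ≤ 1 := by
  rw [stdNormalCDF, ← ENNReal.toReal_one]
  exact ENNReal.toReal_mono (by simp) prob_le_one

lemma cdf_meas : Measurable stdNormalCDF := cdf_mono.measurable

lemma map_neg_gr : (gaussianReal 0 1).map (fun x => -1 * x) = gaussianReal 0 1 := by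
  rw [gaussianReal_map_const_mul (-1)]
  congr 1 <;> norm_num

lemma cdf_neg (x : ℝ) : stdNormalCDF (-x) = 1 - stdNormalCDF x := by
  have h1 : gaussianReal 0 1 (Set.Iic (-x)) = gaussianReal 0 1 (Set.Ici x) := by
    conv_lhs => rw [← map_neg_gr]
    rw [Measure.map_apply (by fun_prop) measurableSet_Iic]
    congr 1
    ext z
    simp only [Set.mem_preimage, Set.mem_Iic, Set.mem_Ici]
    constructor <;> intro h <;> linarith
  have h2 : gaussianReal 0 1 (Set.Ici x) + gaussianReal 0 1 (Set.Iic x)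
      = 1 + gaussianReal 0 1 {x} := by
    rw [← measure_union_add_inter (Set.Ici x) measurableSet_Iic]
    rw [Set.union_comm, Set.Iic_union_Ici, Set.Ici_inter_Iic, Set.Icc_self]
    simp
  rw [gr_singleton, add_zero] at h2
  have h3 := congrArg ENNReal.toReal h2
  rw [ENNReal.toReal_add (measure_ne_top _ _) (measure_ne_top _ _), ENNReal.toReal_one] at h3
  rw [stdNormalCDF, h1, stdNormalCDF]
  linarith

lemma cdf_zero : stdNormalCDF 0 = 1/2 := by
  have := cdf_neg 0
  rw [neg_zero] at this
  linarith

lemma gr_Ioc {a b : ℝ} (hab : a ≤ b) :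
    gaussianReal 0 1 (Set.Ioc a b) = ENNReal.ofReal (stdNormalCDF b - stdNormalCDF a) := by
  have h : gaussianReal 0 1 (Set.Iic a) + gaussianReal 0 1 (Set.Ioc a b)
      = gaussianReal 0 1 (Set.Iic b) := by
    rw [← measure_union (by rw [Set.disjoint_left]; intro z hz hz2; exact absurd hz2.1 (not_lt.mpr hz))
      measurableSet_Ioc, Set.Iic_union_Ioc_eq_Iic hab]
  have h3 := congrArg ENNReal.toReal h
  rw [ENNReal.toReal_add (measure_ne_top _ _) (measure_ne_top _ _)] at h3
  simp only [stdNormalCDF]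
  rw [← h3, add_sub_cancel_left, ENNReal.ofReal_toReal (measure_ne_top _ _)]

lemma gr_Icc {a b : ℝ} (hab : a ≤ b) :
    gaussianReal 0 1 (Set.Icc a b) = ENNReal.ofReal (stdNormalCDF b - stdNormalCDF a) := by
  rw [← gr_Ioc hab, ← Set.Ioc_union_left hab]
  apply le_antisymm
  · calc gaussianReal 0 1 (Set.Ioc a b ∪ {a})
        ≤ gaussianReal 0 1 (Set.Ioc a b) + gaussianReal 0 1 {a} := measure_union_le _ _
      _ = gaussianReal 0 1 (Set.Ioc a b) := by rw [gr_singleton, add_zero]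
  · exact measure_mono Set.subset_union_left

lemma pdf_cont : Continuous (gaussianPDFReal 0 1) := by
  rw [gaussianPDFReal_def]
  fun_prop

lemma pdf_even (x : ℝ) : gaussianPDFReal 0 1 (-x) = gaussianPDFReal 0 1 x := by
  simp [gaussianPDFReal, neg_sq]

lemma integral_pdf {a b : ℝ} (hab : a ≤ b) :
    ∫ s in a..b, gaussianPDFReal 0 1 s = stdNormalCDF b - stdNormalCDF a := by
  rw [intervalIntegral.integral_of_le hab]
  have h := gaussianReal_apply_eq_integral 0 (one_ne_zero) (Set.Ioc a b)
  rw [gr_Ioc hab] at h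
  have hnn : 0 ≤ ∫ x in Set.Ioc a b, gaussianPDFReal 0 1 x :=
    setIntegral_nonneg measurableSet_Ioc (fun x _ => gaussianPDFReal_nonneg 0 1 x)
  have hnn2 : 0 ≤ stdNormalCDF b - stdNormalCDF a := sub_nonneg.mpr (cdf_mono hab)
  have := (ENNReal.ofReal_eq_ofReal_iff hnn2 hnn).mp h
  linarith


lemma gr_slice (θ₁ θ₂ t : ℝ) (h₁ : 0 < θ₁) (h₂ : 0 < θ₂) (ht : 0 < t) (y : ℝ) :
    gaussianReal 0 1 {x : ℝ | x ^ 2 / θ₁ + y ^ 2 / θ₂ ≤ t}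
      = ENNReal.ofReal (Set.indicator
          (Set.Icc (-(Real.sqrt (θ₂ * t))) (Real.sqrt (θ₂ * t)))
          (fun y => 2 * stdNormalCDF (Real.sqrt (θ₁ * (t - y ^ 2 / θ₂))) - 1) y) := by
  by_cases hy : y ∈ Set.Icc (-(Real.sqrt (θ₂ * t))) (Real.sqrt (θ₂ * t))
  · rw [Set.indicator_of_mem hy]
    have hy2 : y ^ 2 / θ₂ ≤ t := by
      have habs : |y| ≤ Real.sqrt (θ₂ * t) := abs_le.mpr ⟨hy.1, hy.2⟩
      have h4 : y ^ 2 ≤ θ₂ * t := by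
        have := (Real.le_sqrt (abs_nonneg y) (le_of_lt (mul_pos h₂ ht))).mp habs
        rwa [sq_abs] at this
      rw [div_le_iff₀ h₂]
      linarith [mul_comm θ₂ t]
    have ha : 0 ≤ θ₁ * (t - y ^ 2 / θ₂) := mul_nonneg h₁.le (by linarith)
    set r := Real.sqrt (θ₁ * (t - y ^ 2 / θ₂)) with hr
    have hset : {x : ℝ | x ^ 2 / θ₁ + y ^ 2 / θ₂ ≤ t} = Set.Icc (-r) r := by
      ext x
      simp only [Set.mem_setOf_eq, Set.mem_Icc, ← abs_le, hr]
      rw [Real.le_sqrt (abs_nonneg x) ha, sq_abs]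
      constructor <;> intro h
      · have h5 := (div_le_iff₀ h₁).mp (by linarith : x ^ 2 / θ₁ ≤ t - y ^ 2 / θ₂)
        nlinarith
      · have h5 : x ^ 2 / θ₁ ≤ t - y ^ 2 / θ₂ := (div_le_iff₀ h₁).mpr (by nlinarith)
        linarith
    rw [hset, gr_Icc (by linarith [Real.sqrt_nonneg (θ₁ * (t - y ^ 2 / θ₂))] : -r ≤ r),
      cdf_neg]
    ring_nf
  · rw [Set.indicator_of_notMem hy]
    have hy2 : t < y ^ 2 / θ₂ := by
      by_contra hc
      push_neg at hc
      have h4 : y ^ 2 ≤ θ₂ * t := by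
        rw [div_le_iff₀ h₂] at hc
        linarith [mul_comm θ₂ t]
      exact hy (abs_le.mp ((Real.le_sqrt (abs_nonneg y)
        (le_of_lt (mul_pos h₂ ht))).mpr (by rwa [sq_abs])))
    have hempty : {x : ℝ | x ^ 2 / θ₁ + y ^ 2 / θ₂ ≤ t} = ∅ := by
      ext x
      simp only [Set.mem_setOf_eq, Set.mem_empty_iff_false, iff_false, not_le]
      have : 0 ≤ x ^ 2 / θ₁ := div_nonneg (sq_nonneg x) h₁.le
      linarith
    simp [hempty]


/-- integral representation of `F₁₂`. -/
theorem F12_eq (θ₁ θ₂ t : ℝ) (h₁ : 0 < θ₁) (h₂ : 0 < θ₂) (ht : 0 < t) :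
    F12 θ₁ θ₂ t
      = 4 * (∫ s in (0:ℝ)..(Real.sqrt (θ₂ * t)),
            stdNormalCDF (Real.sqrt (θ₁ * (t - s ^ 2 / θ₂))) * gaussianPDFReal 0 1 s)
        - 2 * stdNormalCDF (Real.sqrt (θ₂ * t)) + 1 := by
  set A := Real.sqrt (θ₂ * t) with hA
  have hA0 : 0 ≤ A := Real.sqrt_nonneg _
  set g : ℝ → ℝ := fun y => 2 * stdNormalCDF (Real.sqrt (θ₁ * (t - y ^ 2 / θ₂))) - 1 with hg
  have hgm : Measurable g := by
    apply Measurable.sub _ measurable_const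
    apply Measurable.const_mul
    exact cdf_meas.comp (Real.continuous_sqrt.measurable.comp (by fun_prop))
  have hg0 : ∀ y, 0 ≤ g y := fun y => by
    have := cdf_mono (Real.sqrt_nonneg (θ₁ * (t - y ^ 2 / θ₂)))
    rw [cdf_zero] at this
    simp only [hg]; linarith
  have hg1 : ∀ y, g y ≤ 1 := fun y => by
    have := cdf_le_one (Real.sqrt (θ₁ * (t - y ^ 2 / θ₂)))
    simp only [hg]; linarith
  set H : ℝ → ℝ := Set.indicator (Set.Icc (-A) A) g with hH
  have hHm : Measurable H := hgm.indicator measurableSet_Icc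
  have hH0 : ∀ y, 0 ≤ H y := fun y => Set.indicator_nonneg (fun y _ => hg0 y) y
  -- step 1 : F12 = ∫ H dγ
  have hS : MeasurableSet {z : ℝ × ℝ | z.1 ^ 2 / θ₁ + z.2 ^ 2 / θ₂ ≤ t} :=
    measurableSet_le (by fun_prop) measurable_const
  have step1 : F12 θ₁ θ₂ t = ∫ y, H y ∂(gaussianReal 0 1) := by
    rw [F12, Measure.prod_apply_symm hS]
    rw [integral_eq_lintegral_of_nonneg_ae (Filter.Eventually.of_forall hH0)
      hHm.aestronglyMeasurable]
    congr 1
    refine lintegral_congr fun y => ?_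
    exact gr_slice θ₁ θ₂ t h₁ h₂ ht y
  -- step 2 : to Lebesgue density
  set F : ℝ → ℝ := fun x => gaussianPDFReal 0 1 x * g x with hF
  have step2 : ∫ y, H y ∂(gaussianReal 0 1)
      = ∫ y in Set.Icc (-A) A, F y := by
    rw [gaussianReal_of_var_ne_zero 0 one_ne_zero]
    have hrw : (gaussianPDF 0 1) = fun x =>
        ((((gaussianPDFReal 0 1 x).toNNReal) : NNReal) : ENNReal) := rfl
    rw [hrw, integral_withDensity_eq_integral_smul
      (f := fun x => (gaussianPDFReal 0 1 x).toNNReal)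
      (by exact measurable_real_toNNReal.comp (measurable_gaussianPDFReal 0 1))]
    rw [← integral_indicator measurableSet_Icc]
    congr 1
    funext y
    simp only [NNReal.smul_def, Real.coe_toNNReal _ (gaussianPDFReal_nonneg 0 1 y),
      smul_eq_mul, hH, hF]
    by_cases hy : y ∈ Set.Icc (-A) A
    · rw [Set.indicator_of_mem hy, Set.indicator_of_mem hy]
    · rw [Set.indicator_of_notMem hy, Set.indicator_of_notMem hy, mul_zero]
  -- integrability
  have hFm : Measurable F := (measurable_gaussianPDFReal 0 1).mul hgm
  have hpdfInt : ∀ a b : ℝ, IntervalIntegrable (gaussianPDFReal 0 1) volume a b :=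
    fun a b => pdf_cont.intervalIntegrable a b
  have hFint : ∀ a b : ℝ, IntervalIntegrable F volume a b := fun a b => by
    refine (hpdfInt a b).mono_fun hFm.aestronglyMeasurable
      (Filter.Eventually.of_forall fun x => ?_)
    simp only [hF, norm_mul, Real.norm_eq_abs]
    rw [abs_of_nonneg (gaussianPDFReal_nonneg 0 1 x), abs_of_nonneg (hg0 x)]
    nlinarith [gaussianPDFReal_nonneg 0 1 x, hg0 x, hg1 x]
  set G : ℝ → ℝ := fun s =>
    stdNormalCDF (Real.sqrt (θ₁ * (t - s ^ 2 / θ₂))) * gaussianPDFReal 0 1 s with hG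
  have hGm : Measurable G :=
    (cdf_meas.comp (Real.continuous_sqrt.measurable.comp (by fun_prop))).mul
      (measurable_gaussianPDFReal 0 1)
  have hGint : ∀ a b : ℝ, IntervalIntegrable G volume a b := fun a b => by
    refine (hpdfInt a b).mono_fun hGm.aestronglyMeasurable
      (Filter.Eventually.of_forall fun x => ?_)
    simp only [hG, norm_mul, Real.norm_eq_abs]
    rw [abs_of_nonneg (gaussianPDFReal_nonneg 0 1 x), abs_of_nonneg (cdf_nonneg _)]
    nlinarith [gaussianPDFReal_nonneg 0 1 x, cdf_nonneg
      (Real.sqrt (θ₁ * (t - x ^ 2 / θ₂))), cdf_le_one (Real.sqrt (θ₁ * (t - x ^ 2 / θ₂)))]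
  -- step 3 : to interval integral and symmetry
  have hFeven : ∀ x, F (-x) = F x := fun x => by
    simp only [hF, hg, pdf_even, neg_sq]
  have step3 : ∫ y in Set.Icc (-A) A, F y = 2 * ∫ y in (0:ℝ)..A, F y := by
    rw [MeasureTheory.integral_Icc_eq_integral_Ioc,
      ← intervalIntegral.integral_of_le (by linarith : -A ≤ A),
      ← intervalIntegral.integral_add_adjacent_intervals (hFint (-A) 0) (hFint 0 A)]
    have hneg : ∫ y in (-A)..(0:ℝ), F y = ∫ y in (0:ℝ)..A, F y := by
      have := intervalIntegral.integral_comp_neg (a := 0) (b := A) F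
      rw [neg_zero] at this
      rw [← this]
      exact intervalIntegral.integral_congr fun x _ => hFeven x
    rw [hneg]; ring
  -- step 4 : split
  have step4 : ∫ y in (0:ℝ)..A, F y
      = 2 * (∫ s in (0:ℝ)..A, G s) - (stdNormalCDF A - 1/2) := by
    have hFeq : ∀ x, F x = 2 * G x - gaussianPDFReal 0 1 x := fun x => by
      simp only [hF, hG, hg]; ring
    rw [intervalIntegral.integral_congr (fun x _ => hFeq x),
      intervalIntegral.integral_sub (((hGint 0 A).const_mul 2)) (hpdfInt 0 A),
      intervalIntegral.integral_const_mul, integral_pdf hA0, cdf_zero]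
  rw [step1, step2, step3, step4]
  ring
end

section
/- Let F_12(t; θ_1, θ_2) = P(Z_1²/θ_1 + Z_2²/θ_2 ≤ t) for independent standard normals. Then ∂²F_12(t; θ_1, θ_2)/∂θ_1² = −∫_0^{√(θ_2 t)} [ (t − s²/θ_2)^{3/2} θ_1^{-1/2} + (t − s²/θ_2)^{1/2} θ_1^{-3/2} ] φ(√(θ_1(t − s²/θ_2))) φ(s) ds, which is strictly negative for t > 0. -/
/-!
Conditioning on `Z₂ = s` gives `F₁₂(t; θ₁, θ₂) = ∫ G(θ₁ (t - s²/θ₂)) φ(s) ds`, where `G` is the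
distribution function of `Z₁²`; the integrand vanishes for `s² > θ₂ t`, and by evenness the
integral is twice the one over `[0, √(θ₂ t)]`. On this compact interval the first two
`θ₁`-derivatives of the integrand are jointly continuous in `(θ₁, s)` for `θ₁ > 0`, hence
locally bounded, so one may differentiate twice under the integral sign. Since
`∂/∂θ₁ G(θ₁ c) = c^{1/2} θ₁^{-1/2} φ(√(θ₁ c))` and `φ(√r) ∝ exp(-r/2)`, the second derivative
of the integrand is `-½ (c^{3/2} θ₁^{-1/2} + c^{1/2} θ₁^{-3/2}) φ(√(θ₁ c)) φ(s)`, which is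
negative whenever `c = t - s²/θ₂ > 0`.
-/

open MeasureTheory ProbabilityTheory Real

local notation "φ" => gaussianPDFReal 0 1

theorem intervalIntegral_neg_self_eq_two_mul {f : ℝ → ℝ} (hf : ∀ s, f (-s) = f s) {r : ℝ}
    (hint : IntervalIntegrable f volume 0 r) :
    ∫ s in -r..r, f s = 2 * ∫ s in (0:ℝ)..r, f s := by
  have hneg : ∫ s in -r..0, f s = ∫ s in (0:ℝ)..r, f s := by
    simpa [hf] using (intervalIntegral.integral_comp_neg (a := 0) (b := r) f).symm
  have hint' : IntervalIntegrable f volume (-r) 0 := by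
    simpa [hf] using ((IntervalIntegrable.iff_comp_neg).mp hint).symm
  rw [← intervalIntegral.integral_add_adjacent_intervals hint' hint, hneg, two_mul]

theorem integral_eq_two_mul_intervalIntegral_of_even {f : ℝ → ℝ} (hf : ∀ s, f (-s) = f s)
    {r : ℝ} (hr : 0 ≤ r) (hzero : ∀ s, r < |s| → f s = 0)
    (hint : IntervalIntegrable f volume 0 r) :
    ∫ s, f s = 2 * ∫ s in (0:ℝ)..r, f s := by
  have hsupp : ∀ s ∉ Set.Icc (-r) r, f s = 0 := fun s hs =>
    hzero s (by rw [Set.mem_Icc, ← abs_le] at hs; exact not_le.mp hs)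
  rw [← setIntegral_eq_integral_of_forall_compl_eq_zero hsupp, integral_Icc_eq_integral_Ioc,
    ← intervalIntegral.integral_of_le (neg_le_self hr),
    intervalIntegral_neg_self_eq_two_mul hf hint]

theorem hasDerivAt_intervalIntegral_of_continuousOn {F F' : ℝ → ℝ → ℝ} {U : Set ℝ} {a b x : ℝ}
    (hU : IsOpen U) (hx : x ∈ U) (hF : ∀ y ∈ U, ContinuousOn (F y) (Set.uIcc a b))
    (hF' : ContinuousOn (Function.uncurry F') (U ×ˢ Set.uIcc a b))
    (hdiff : ∀ s ∈ Set.uIcc a b, ∀ y ∈ U, HasDerivAt (F · s) (F' y s) y) :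
    HasDerivAt (fun y => ∫ s in a..b, F y s) (∫ s in a..b, F' x s) x := by
  obtain ⟨r, hr, hball⟩ := Metric.nhds_basis_closedBall.mem_iff.mp (hU.mem_nhds hx)
  obtain ⟨C, hC⟩ := (isCompact_closedBall x r |>.prod isCompact_uIcc).exists_bound_of_continuousOn
    (hF'.mono (Set.prod_mono hball le_rfl))
  have hΙ : Set.uIoc a b ⊆ Set.uIcc a b := Set.uIoc_subset_uIcc
  refine (intervalIntegral.hasDerivAt_integral_of_dominated_loc_of_deriv_le (bound := fun _ => C)
    (Metric.ball_mem_nhds x hr) ?_ ?_ ?_ ?_ intervalIntegrable_const ?_).2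
  · filter_upwards [Metric.ball_mem_nhds x hr] with y hy
    exact ((hF y (hball (Metric.ball_subset_closedBall hy))).mono hΙ).aestronglyMeasurable
      measurableSet_uIoc
  · exact (hF x hx).intervalIntegrable
  · refine (ContinuousOn.mono ?_ hΙ).aestronglyMeasurable measurableSet_uIoc
    exact hF'.comp (Continuous.prodMk_right x).continuousOn fun s hs => ⟨hx, hs⟩
  · exact ae_of_all _ fun s hs y hy => hC (y, s) ⟨Metric.ball_subset_closedBall hy, hΙ hs⟩
  · exact ae_of_all _ fun s hs y hy => hdiff s (hΙ hs) y (hball (Metric.ball_subset_closedBall hy))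

@[fun_prop]
theorem continuous_gaussianPDFReal_zero_one : Continuous φ := by
  unfold gaussianPDFReal
  fun_prop

theorem gaussianPDFReal_zero_one_neg (x : ℝ) : φ (-x) = φ x := by
  simp [gaussianPDFReal]

theorem gaussianPDFReal_zero_one_sqrt {r : ℝ} (hr : 0 ≤ r) :
    φ √r = (√(2 * π))⁻¹ * exp (-r / 2) := by
  simp [gaussianPDFReal, sq_sqrt hr]

noncomputable def chiSqOneCDF (r : ℝ) : ℝ := 2 * ∫ u in (0:ℝ)..√r, φ u

@[fun_prop]
theorem continuous_chiSqOneCDF : Continuous chiSqOneCDF :=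
  continuous_const.mul (((integrable_gaussianPDFReal 0 1).continuous_primitive 0).comp
    continuous_sqrt)

theorem chiSqOneCDF_nonneg (r : ℝ) : 0 ≤ chiSqOneCDF r :=
  mul_nonneg zero_le_two (intervalIntegral.integral_nonneg (sqrt_nonneg r) fun u _ =>
    gaussianPDFReal_nonneg 0 1 u)

theorem chiSqOneCDF_of_nonpos {r : ℝ} (hr : r ≤ 0) : chiSqOneCDF r = 0 := by
  simp [chiSqOneCDF, sqrt_eq_zero'.mpr hr]

theorem gaussianReal_setOf_sq_le (r : ℝ) :
    gaussianReal 0 1 {u | u ^ 2 ≤ r} = ENNReal.ofReal (chiSqOneCDF r) := by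
  rcases lt_or_ge r 0 with hr | hr
  · have hempty : {u : ℝ | u ^ 2 ≤ r} = ∅ :=
      Set.eq_empty_of_forall_notMem fun u hu => (lt_of_le_of_lt hu hr).not_ge (sq_nonneg u)
    simp [hempty, chiSqOneCDF_of_nonpos hr.le]
  · have hIcc : {u : ℝ | u ^ 2 ≤ r} = Set.Icc (-√r) √r := by
      ext u
      exact sq_le hr
    rw [hIcc, gaussianReal_apply_eq_integral 0 one_ne_zero, integral_Icc_eq_integral_Ioc,
      ← intervalIntegral.integral_of_le (neg_le_self (sqrt_nonneg r)),
      intervalIntegral_neg_self_eq_two_mul gaussianPDFReal_zero_one_neg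
        (integrable_gaussianPDFReal 0 1).intervalIntegrable, chiSqOneCDF]

theorem hasDerivAt_chiSqOneCDF {r : ℝ} (hr : 0 < r) :
    HasDerivAt chiSqOneCDF (φ √r / √r) r := by
  have hprim := intervalIntegral.integral_hasDerivAt_right (a := 0) (b := √r)
    (integrable_gaussianPDFReal 0 1).intervalIntegrable
    continuous_gaussianPDFReal_zero_one.stronglyMeasurable.stronglyMeasurableAtFilter
    continuous_gaussianPDFReal_zero_one.continuousAt
  refine ((hprim.comp r (hasDerivAt_sqrt hr.ne')).const_mul 2).congr_deriv ?_
  field_simp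

theorem hasDerivAt_chiSqOneCDF_mul (c : ℝ) {y : ℝ} (hy : 0 < y) :
    HasDerivAt (fun y => chiSqOneCDF (y * c))
      (c ^ ((1:ℝ)/2) * y ^ (-(1:ℝ)/2) * φ √(y * c)) y := by
  rcases le_or_gt c 0 with hc | hc
  · have hzero : (fun y => chiSqOneCDF (y * c)) =ᶠ[nhds y] fun _ => 0 := by
      filter_upwards [Ioi_mem_nhds hy] with z hz
      exact chiSqOneCDF_of_nonpos (mul_nonpos_of_nonneg_of_nonpos hz.le hc)
    rw [← sqrt_eq_rpow, sqrt_eq_zero'.mpr hc, zero_mul, zero_mul]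
    exact (hasDerivAt_const y 0).congr_of_eventuallyEq hzero
  · refine ((hasDerivAt_chiSqOneCDF (mul_pos hy hc)).comp y
      (hasDerivAt_mul_const c)).congr_deriv ?_
    rw [← sqrt_eq_rpow, show -(1:ℝ)/2 = -(1/2) by norm_num, rpow_neg hy.le, ← sqrt_eq_rpow,
      sqrt_mul hy.le]
    have hy' := sqrt_pos.mpr hy
    have hc' := sqrt_pos.mpr hc
    field_simp
    rw [sq_sqrt hc.le, mul_comm]

theorem hasDerivAt_rpow_mul_gaussianPDFReal_sqrt_mul {c : ℝ} (hc : 0 ≤ c) {y : ℝ} (hy : 0 < y) :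
    HasDerivAt (fun y => c ^ ((1:ℝ)/2) * y ^ (-(1:ℝ)/2) * φ √(y * c))
      (-(1/2) * (c ^ ((3:ℝ)/2) * y ^ (-(1:ℝ)/2) + c ^ ((1:ℝ)/2) * y ^ (-(3:ℝ)/2))
        * φ √(y * c)) y := by
  have hexp : (fun y => c ^ ((1:ℝ)/2) * y ^ (-(1:ℝ)/2) * φ √(y * c)) =ᶠ[nhds y]
      fun y => c ^ ((1:ℝ)/2) * (√(2 * π))⁻¹ * (y ^ (-(1:ℝ)/2) * exp (-(y * c) / 2)) := by
    filter_upwards [Ioi_mem_nhds hy] with z hz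
    rw [gaussianPDFReal_zero_one_sqrt (mul_nonneg hz.le hc)]
    ring
  have hderiv := (((hasDerivAt_rpow_const (p := -(1:ℝ)/2) (Or.inl hy.ne')).mul
    (((hasDerivAt_mul_const c).neg.div_const 2).exp)).const_mul (c ^ ((1:ℝ)/2) * (√(2 * π))⁻¹))
  refine (hderiv.congr_of_eventuallyEq hexp).congr_deriv ?_
  rw [gaussianPDFReal_zero_one_sqrt (mul_nonneg hy.le hc), show -(1:ℝ)/2 - 1 = -(3:ℝ)/2 by norm_num,
    show (3:ℝ)/2 = 1/2 + 1 by norm_num, rpow_add' hc (by norm_num), rpow_one]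
  simp only [Pi.neg_apply]
  ring

theorem sub_sq_div_pos_of_abs_lt_sqrt {θ t s : ℝ} (hθ : 0 < θ) (hs : |s| < √(θ * t)) :
    0 < t - s ^ 2 / θ := by
  rw [sub_pos, div_lt_iff₀ hθ, mul_comm, ← sq_abs]
  exact (lt_sqrt (abs_nonneg s)).mp hs

theorem sub_sq_div_nonneg_of_mem_uIcc {θ t s : ℝ} (hθ : 0 < θ) (ht : 0 ≤ t)
    (hs : s ∈ Set.uIcc 0 √(θ * t)) : 0 ≤ t - s ^ 2 / θ := by
  rw [Set.uIcc_of_le (sqrt_nonneg _)] at hs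
  rw [sub_nonneg, div_le_iff₀ hθ, mul_comm]
  exact (le_sqrt hs.1 (by positivity)).mp hs.2

theorem F12_eq_integral (θ₂ t : ℝ) {x : ℝ} (hx : 0 < x) :
    F12 x θ₂ t = ∫ s, chiSqOneCDF (x * (t - s ^ 2 / θ₂)) * φ s := by
  have hS : MeasurableSet {z : ℝ × ℝ | z.1 ^ 2 / x + z.2 ^ 2 / θ₂ ≤ t} :=
    measurableSet_le (by fun_prop) measurable_const
  have hsection : ∀ s : ℝ, (fun u => (u, s)) ⁻¹' {z : ℝ × ℝ | z.1 ^ 2 / x + z.2 ^ 2 / θ₂ ≤ t}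
      = {u | u ^ 2 ≤ x * (t - s ^ 2 / θ₂)} := fun s => by
    ext u
    simp only [Set.mem_preimage, Set.mem_ofPred_eq, ← div_le_iff₀' hx, le_sub_iff_add_le]
  rw [F12, Measure.prod_apply_symm hS]
  simp_rw [hsection, gaussianReal_setOf_sq_le]
  rw [← integral_eq_lintegral_of_nonneg_ae (ae_of_all _ fun s => chiSqOneCDF_nonneg _)
    (by fun_prop), integral_gaussianReal_eq_integral_smul one_ne_zero]
  simp_rw [smul_eq_mul, mul_comm]

theorem F12_eq_two_mul_intervalIntegral {θ₂ : ℝ} (h₂ : 0 < θ₂) (t : ℝ) {x : ℝ} (hx : 0 < x) :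
    F12 x θ₂ t = 2 * ∫ s in (0:ℝ)..√(θ₂ * t), chiSqOneCDF (x * (t - s ^ 2 / θ₂)) * φ s := by
  refine (F12_eq_integral θ₂ t hx).trans (integral_eq_two_mul_intervalIntegral_of_even
    (fun s => by rw [neg_sq, gaussianPDFReal_zero_one_neg]) (sqrt_nonneg _) (fun s hs => ?_)
    (Continuous.intervalIntegrable (by fun_prop) _ _))
  have hts : t < s ^ 2 / θ₂ := by
    rw [lt_div_iff₀ h₂, mul_comm, ← sq_abs]
    exact lt_sq_of_sqrt_lt hs
  rw [chiSqOneCDF_of_nonpos (mul_nonpos_of_nonneg_of_nonpos hx.le (by linarith)), zero_mul]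

theorem hasDerivAt_F12 {θ₂ : ℝ} (h₂ : 0 < θ₂) (t : ℝ) {y : ℝ} (hy : 0 < y) :
    HasDerivAt (fun x => F12 x θ₂ t)
      (2 * ∫ s in (0:ℝ)..√(θ₂ * t), (t - s ^ 2 / θ₂) ^ ((1:ℝ)/2) * y ^ (-(1:ℝ)/2)
        * φ √(y * (t - s ^ 2 / θ₂)) * φ s) y := by
  have hF' : ContinuousOn (Function.uncurry fun y s => (t - s ^ 2 / θ₂) ^ ((1:ℝ)/2)
      * y ^ (-(1:ℝ)/2) * φ √(y * (t - s ^ 2 / θ₂)) * φ s) (Set.Ioi 0 ×ˢ Set.uIcc 0 √(θ₂ * t)) := by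
    refine continuousOn_of_forall_continuousAt fun z hz => ?_
    fun_prop (disch := first | exact Or.inl (Set.mem_Ioi.mp hz.1).ne' | norm_num)
  refine ((hasDerivAt_intervalIntegral_of_continuousOn
    (F := fun y s => chiSqOneCDF (y * (t - s ^ 2 / θ₂)) * φ s) isOpen_Ioi hy
    (fun y _ => by fun_prop) hF' fun s _ y hy => (hasDerivAt_chiSqOneCDF_mul _ hy).mul_const _
    ).const_mul 2).congr_of_eventuallyEq ?_
  filter_upwards [Ioi_mem_nhds hy] with x hx using F12_eq_two_mul_intervalIntegral h₂ t hx

theorem hasDerivAt_deriv_F12 {θ₂ t : ℝ} (h₂ : 0 < θ₂) (ht : 0 ≤ t) {y : ℝ} (hy : 0 < y) :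
    HasDerivAt (deriv fun x => F12 x θ₂ t)
      (-∫ s in (0:ℝ)..√(θ₂ * t), ((t - s ^ 2 / θ₂) ^ ((3:ℝ)/2) * y ^ (-(1:ℝ)/2)
        + (t - s ^ 2 / θ₂) ^ ((1:ℝ)/2) * y ^ (-(3:ℝ)/2)) * φ √(y * (t - s ^ 2 / θ₂)) * φ s) y := by
  have hF' : ContinuousOn (Function.uncurry fun y s => -(1/2) * ((t - s ^ 2 / θ₂) ^ ((3:ℝ)/2)
      * y ^ (-(1:ℝ)/2) + (t - s ^ 2 / θ₂) ^ ((1:ℝ)/2) * y ^ (-(3:ℝ)/2))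
      * φ √(y * (t - s ^ 2 / θ₂)) * φ s) (Set.Ioi 0 ×ˢ Set.uIcc 0 √(θ₂ * t)) := by
    refine continuousOn_of_forall_continuousAt fun z hz => ?_
    fun_prop (disch := first | exact Or.inl (Set.mem_Ioi.mp hz.1).ne' | norm_num)
  have hF : ∀ y ∈ Set.Ioi (0:ℝ), ContinuousOn (fun s => (t - s ^ 2 / θ₂) ^ ((1:ℝ)/2)
      * y ^ (-(1:ℝ)/2) * φ √(y * (t - s ^ 2 / θ₂)) * φ s) (Set.uIcc 0 √(θ₂ * t)) :=
    fun y _ => by fun_prop (disch := norm_num)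
  refine (((hasDerivAt_intervalIntegral_of_continuousOn isOpen_Ioi hy hF hF'
    fun s hs y hy => (hasDerivAt_rpow_mul_gaussianPDFReal_sqrt_mul
      (sub_sq_div_nonneg_of_mem_uIcc h₂ ht hs) hy).mul_const (φ s)).const_mul 2
    ).congr_of_eventuallyEq ?_).congr_deriv ?_
  · filter_upwards [Ioi_mem_nhds hy] with x hx using (hasDerivAt_F12 h₂ t hx).deriv
  · simp only [mul_assoc]
    rw [intervalIntegral.integral_const_mul]
    ring

/-- the second partial derivative of `F₁₂` in `θ₁` has an explicit
integral form and is strictly negative. -/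
theorem second_deriv_F12 (θ₁ θ₂ t : ℝ) (h₁ : 0 < θ₁) (h₂ : 0 < θ₂) (ht : 0 < t) :
    deriv (deriv (fun x => F12 x θ₂ t)) θ₁
        = -∫ s in (0:ℝ)..(Real.sqrt (θ₂ * t)),
            ((t - s ^ 2 / θ₂) ^ ((3:ℝ)/2) * θ₁ ^ (-(1:ℝ)/2)
                + (t - s ^ 2 / θ₂) ^ ((1:ℝ)/2) * θ₁ ^ (-(3:ℝ)/2))
              * gaussianPDFReal 0 1 (Real.sqrt (θ₁ * (t - s ^ 2 / θ₂)))
              * gaussianPDFReal 0 1 s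
      ∧ deriv (deriv (fun x => F12 x θ₂ t)) θ₁ < 0 := by
  rw [(hasDerivAt_deriv_F12 h₂ ht.le h₁).deriv]
  refine ⟨rfl, neg_neg_of_pos ?_⟩
  refine intervalIntegral.intervalIntegral_pos_of_pos_on
    (Continuous.intervalIntegrable (by fun_prop (disch := norm_num)) _ _) (fun s hs => ?_)
    (sqrt_pos.mpr (by positivity))
  have hc := sub_sq_div_pos_of_abs_lt_sqrt h₂ (by rw [abs_of_pos hs.1]; exact hs.2)
  have hφ₁ := gaussianPDFReal_pos 0 1 √(θ₁ * (t - s ^ 2 / θ₂)) one_ne_zero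
  have hφ₂ := gaussianPDFReal_pos 0 1 s one_ne_zero
  positivity
end
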